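/- arXiv:2211.11904 — 2 statements merged into one kernel-verified Lean document; each statement's English description precedes it below -/
import Mathlib

section
/- There exists a universal constant c > 0 such that the following holds. Let n ≥ 3, A, B ∈ (0,1), and let ρ, ρ* ∈ ℝ^n satisfy A ≤ ρ_i ≤ 1−B and A ≤ ρ*_i ≤ 1−B for all i. Then Σ_{i=1}^n ( Σ_{j≠i} (ρ*_i ρ*_j − ρ_i ρ_j)·λ_j(ρ) )² ≥ c · (A¹² B⁸ / n¹¹) · Σ_{i=1}^n (ρ_i − ρ*_i)². (The left-hand side equals Σ_i (E_{μ^{t+1}}[x_i y] − E_{μ^t}[x_i y])² for the population EM iteration with unit variances.) -/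
/-!
Put `a i = ρ i / (1 - ρ i ^ 2)`, `μ i = a i (ρ* i + ρ i)` and `e i = a i (ρ* i - ρ i)`. Then
`2 a i (1 + ∑ a k ρ k)` times the `i`-th covariance movement is the residual
`r i = e i (M - 2 μ i) + μ i (∑ e)` with `M = ∑ μ`, and `|ρ i - ρ* i| ≤ 2 |e i| / μ i`, so it
suffices to invert this linear system quantitatively. Only a heaviest coordinate `b` can have
`M - 2 μ b ≤ 0`; solving the other equations for `e i` and substituting into the `b`-th one
gives `(∑ e) K = r b + ∑_{i ≠ b} (M - 2 μ b) r i / (M - 2 μ i)`, where the weight `K` stays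
positive because `(M - 2 μ i) + (M - 2 μ b) = 2 (M - μ b - μ i)` is a sum of at least one
`μ k` (this is where `n ≥ 3` enters). This bounds `∑ e`, hence each `e i`, by the residuals.
-/

open Finset

/-- Conditional-mean coefficients for the one-latent-node Gaussian tree model. -/
noncomputable def lam (n : ℕ) (ρ : Fin n → ℝ) (j : Fin n) : ℝ :=
  (ρ j / (1 - ρ j ^ 2)) / (1 + ∑ k, ρ k ^ 2 / (1 - ρ k ^ 2))

section ResidualSystem

variable {ι : Type*} [Fintype ι]

def emResidual (μ e : ι → ℝ) (i : ι) : ℝ :=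
  e i * (∑ j, μ j - 2 * μ i) + μ i * ∑ j, e j

variable [DecidableEq ι] {μ e : ι → ℝ} {ℓ ν : ℝ} {b : ι}

theorem le_sum_sub_sub (hcard : 3 ≤ Fintype.card ι) (hℓ : 0 ≤ ℓ) (hμ : ∀ j, ℓ ≤ μ j)
    {i : ι} (hib : i ≠ b) : ℓ ≤ ∑ j, μ j - μ b - μ i := by
  have hcard' : 1 < #(univ.erase b) := by
    rw [card_erase_of_mem (mem_univ b), card_univ]; omega
  obtain ⟨k, hk, hki⟩ := exists_mem_ne hcard' i
  rw [← sum_erase_eq_sub (mem_univ b), ← sum_erase_eq_sub (mem_erase.2 ⟨hib, mem_univ i⟩)]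
  exact (hμ k).trans <| single_le_sum (fun j _ => hℓ.trans (hμ j)) (mem_erase.2 ⟨hki, hk⟩)

theorem sum_mul_sum_erase_eq (b : ι) (hd : ∀ i ∈ univ.erase b, ∑ j, μ j - 2 * μ i ≠ 0) :
    (∑ j, e j) * ∑ i ∈ univ.erase b, 2 * μ i * (∑ j, μ j - μ b - μ i) / (∑ j, μ j - 2 * μ i)
      = emResidual μ e b + ∑ i ∈ univ.erase b,
          (∑ j, μ j - 2 * μ b) * emResidual μ e i / (∑ j, μ j - 2 * μ i) := by
  set M := ∑ j, μ j
  set E := ∑ j, e j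
  have hweight : ∀ i ∈ univ.erase b, 2 * μ i * (M - μ b - μ i) / (M - 2 * μ i)
      = μ i + (M - 2 * μ b) * μ i / (M - 2 * μ i) := by
    intro i hi
    field_simp [hd i hi]
    ring
  have hres : ∀ i ∈ univ.erase b, (M - 2 * μ b) * emResidual μ e i / (M - 2 * μ i)
      = (M - 2 * μ b) * e i + E * ((M - 2 * μ b) * μ i / (M - 2 * μ i)) := by
    intro i hi
    simp only [emResidual]
    field_simp [hd i hi]
    ring
  have hμb : ∑ i ∈ univ.erase b, μ i = M - μ b := sum_erase_eq_sub (mem_univ b)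
  have heb : ∑ i ∈ univ.erase b, e i = E - e b := sum_erase_eq_sub (mem_univ b)
  rw [sum_congr rfl hweight, sum_congr rfl hres, sum_add_distrib, sum_add_distrib, ← mul_sum,
    ← mul_sum, hμb, heb, emResidual]
  ring

theorem abs_sum_mul_sq_le (hcard : 3 ≤ Fintype.card ι) (hℓ : 0 < ℓ) (hμ : ∀ j, ℓ ≤ μ j)
    (hb : ∀ j, μ j ≤ μ b) (hr : ∀ j, |emResidual μ e j| ≤ ν) :
    |∑ j, e j| * ℓ ^ 2 ≤ ν * ∑ j, μ j := by
  set M := ∑ j, μ j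
  have hμ0 : ∀ j, 0 ≤ μ j := fun j => hℓ.le.trans (hμ j)
  have hM0 : 0 ≤ M := sum_nonneg fun j _ => hμ0 j
  have hν : 0 ≤ ν := (abs_nonneg _).trans (hr b)
  have hdℓ : ∀ i ∈ univ.erase b, ℓ ≤ M - 2 * μ i := fun i hi => by
    linarith [le_sum_sub_sub hcard hℓ.le hμ (ne_of_mem_erase hi), hb i]
  have hdpos : ∀ i ∈ univ.erase b, 0 < M - 2 * μ i := fun i hi => hℓ.trans_le (hdℓ i hi)
  have hdb : |M - 2 * μ b| ≤ M := by
    have : μ b ≤ M := single_le_sum (fun j _ => hμ0 j) (mem_univ b)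
    rw [abs_le]; constructor <;> linarith [hμ0 b]
  set u := ∑ i ∈ univ.erase b, (M - 2 * μ i)⁻¹
  have hu : 1 ≤ M * u := by
    obtain ⟨i, hi⟩ : (univ.erase b).Nonempty := by
      rw [← card_pos, card_erase_of_mem (mem_univ b), card_univ]; omega
    have hMi : M - 2 * μ i ≤ M := by linarith [hμ0 i]
    calc 1 ≤ M * (M - 2 * μ i)⁻¹ := by
          rw [← div_eq_mul_inv, one_le_div (hdpos i hi)]; exact hMi
      _ ≤ M * u := by
          gcongr
          exact single_le_sum (fun j hj => (inv_pos.2 (hdpos j hj)).le) hi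
  have hT : 2 * ℓ ^ 2 * u
      ≤ ∑ i ∈ univ.erase b, 2 * μ i * (M - μ b - μ i) / (M - 2 * μ i) := by
    rw [mul_sum]
    refine sum_le_sum fun i hi => ?_
    rw [← div_eq_mul_inv]
    refine div_le_div_of_nonneg_right ?_ (hdpos i hi).le
    have := le_sum_sub_sub hcard hℓ.le hμ (ne_of_mem_erase hi)
    have := mul_le_mul (hμ i) this hℓ.le (hμ0 i)
    linarith
  have hrhs : |emResidual μ e b + ∑ i ∈ univ.erase b,
      (M - 2 * μ b) * emResidual μ e i / (M - 2 * μ i)| ≤ 2 * M * ν * u := by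
    calc _ ≤ ν + ∑ i ∈ univ.erase b, M * ν * (M - 2 * μ i)⁻¹ := by
          refine (abs_add_le _ _).trans (add_le_add (hr b) ?_)
          refine (abs_sum_le_sum_abs _ _).trans (sum_le_sum fun i hi => ?_)
          rw [abs_div, abs_mul, abs_of_pos (hdpos i hi), div_eq_mul_inv]
          exact mul_le_mul_of_nonneg_right (mul_le_mul hdb (hr i) (abs_nonneg _) hM0)
            (inv_nonneg.2 (hdpos i hi).le)
      _ ≤ 2 * M * ν * u := by rw [← mul_sum]; nlinarith
  have hupos : 0 < u := by nlinarith
  have hE : |∑ j, e j| * ∑ i ∈ univ.erase b, 2 * μ i * (M - μ b - μ i) / (M - 2 * μ i)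
      = |emResidual μ e b + ∑ i ∈ univ.erase b,
          (M - 2 * μ b) * emResidual μ e i / (M - 2 * μ i)| := by
    rw [← abs_of_nonneg ((by positivity : 0 ≤ 2 * ℓ ^ 2 * u).trans hT), ← abs_mul]
    exact congrArg abs (sum_mul_sum_erase_eq b fun i hi => (hdpos i hi).ne')
  have := mul_le_mul_of_nonneg_left hT (abs_nonneg (∑ j, e j))
  nlinarith

theorem abs_mul_sq_le_of_ne (hcard : 3 ≤ Fintype.card ι) (hℓ : 0 < ℓ) (hμ : ∀ j, ℓ ≤ μ j)
    (hb : ∀ j, μ j ≤ μ b) (hr : ∀ j, |emResidual μ e j| ≤ ν) {i : ι} (hib : i ≠ b) :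
    |e i| * ℓ ^ 2 ≤ μ i * (ν + ℓ * |∑ j, e j|) := by
  have hd : ℓ ≤ ∑ j, μ j - 2 * μ i := by linarith [le_sum_sub_sub hcard hℓ.le hμ hib, hb i]
  have hei : |e i| * (∑ j, μ j - 2 * μ i) ≤ ν + μ i * |∑ j, e j| := by
    have : e i * (∑ j, μ j - 2 * μ i) = emResidual μ e i - μ i * ∑ j, e j := by
      rw [emResidual]; ring
    rw [← abs_of_pos (hℓ.trans_le hd), ← abs_mul, this]
    refine (abs_sub _ _).trans (add_le_add (hr i) ?_)
    rw [abs_mul, abs_of_nonneg (hℓ.le.trans (hμ i))]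
  have := mul_le_mul_of_nonneg_left hd (abs_nonneg (e i))
  have := mul_le_mul_of_nonneg_right (hμ i) ((abs_nonneg _).trans (hr i))
  nlinarith

theorem abs_mul_sq_le (hcard : 3 ≤ Fintype.card ι) (hℓ : 0 < ℓ) (hμ : ∀ j, ℓ ≤ μ j)
    (hb : ∀ j, μ j ≤ μ b) (hr : ∀ j, |emResidual μ e j| ≤ ν) (i : ι) :
    |e i| * ℓ ^ 2 ≤ Fintype.card ι * μ i * (ν + ℓ * |∑ j, e j|) := by
  have hν : 0 ≤ ν := (abs_nonneg _).trans (hr b)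
  have hn : (1 : ℝ) ≤ Fintype.card ι := by exact_mod_cast (by omega : 1 ≤ Fintype.card ι)
  by_cases hib : i = b
  · subst hib
    have hsplit : |e i| ≤ |∑ j, e j| + ∑ j ∈ univ.erase i, |e j| := by
      have heb : e i = ∑ j, e j - ∑ j ∈ univ.erase i, e j := by
        rw [sum_erase_eq_sub (mem_univ i)]; ring
      rw [heb]
      exact (abs_sub _ _).trans (add_le_add_right (abs_sum_le_sum_abs e _) _)
    have hheavy : |∑ j, e j| * ℓ ^ 2 ≤ μ i * (ν + ℓ * |∑ j, e j|) := by
      nlinarith [mul_le_mul_of_nonneg_right (hμ i) (mul_nonneg hℓ.le (abs_nonneg (∑ j, e j))),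
        mul_nonneg (hℓ.le.trans (hμ i)) hν]
    have hlight : ∑ j ∈ univ.erase i, |e j| * ℓ ^ 2
        ≤ (Fintype.card ι - 1) * (μ i * (ν + ℓ * |∑ j, e j|)) := by
      refine (sum_le_sum fun j hj => (abs_mul_sq_le_of_ne hcard hℓ hμ hb hr
        (ne_of_mem_erase hj)).trans (mul_le_mul_of_nonneg_right (hb j) (by positivity))).trans ?_
      rw [sum_const, card_erase_of_mem (mem_univ i), card_univ, nsmul_eq_mul,
        Nat.cast_sub (by omega), Nat.cast_one]
    calc |e i| * ℓ ^ 2 ≤ (|∑ j, e j| + ∑ j ∈ univ.erase i, |e j|) * ℓ ^ 2 := by gcongr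
      _ = |∑ j, e j| * ℓ ^ 2 + ∑ j ∈ univ.erase i, |e j| * ℓ ^ 2 := by rw [add_mul, sum_mul]
      _ ≤ _ := by linarith
  · calc |e i| * ℓ ^ 2 ≤ μ i * (ν + ℓ * |∑ j, e j|) :=
          abs_mul_sq_le_of_ne hcard hℓ hμ hb hr hib
      _ ≤ _ := by
        rw [mul_assoc]
        exact le_mul_of_one_le_left (mul_nonneg (hℓ.le.trans (hμ i)) (by positivity)) hn

theorem abs_mul_pow_three_le (hcard : 3 ≤ Fintype.card ι) (hℓ : 0 < ℓ) (hμ : ∀ j, ℓ ≤ μ j)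
    (hr : ∀ j, |emResidual μ e j| ≤ ν) (i : ι) :
    |e i| * ℓ ^ 3 ≤ 2 * Fintype.card ι * μ i * ν * ∑ j, μ j := by
  obtain ⟨b, -, hb⟩ := exists_max_image univ μ
    (univ_nonempty_iff.2 (Fintype.card_pos_iff.1 (by omega)))
  have hb' : ∀ j, μ j ≤ μ b := fun j => hb j (mem_univ j)
  have hE := abs_sum_mul_sq_le hcard hℓ hμ hb' hr
  have hi := abs_mul_sq_le hcard hℓ hμ hb' hr i
  have hℓM : ℓ ≤ ∑ j, μ j :=
    (hμ b).trans (single_le_sum (fun j _ => hℓ.le.trans (hμ j)) (mem_univ b))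
  have hν : 0 ≤ ν := (abs_nonneg _).trans (hr b)
  have hnμ : 0 ≤ Fintype.card ι * μ i := mul_nonneg (Nat.cast_nonneg _) (hℓ.le.trans (hμ i))
  calc |e i| * ℓ ^ 3 = ℓ * (|e i| * ℓ ^ 2) := by ring
    _ ≤ ℓ * (Fintype.card ι * μ i * (ν + ℓ * |∑ j, e j|)) := by gcongr
    _ = Fintype.card ι * μ i * (ℓ * ν + |∑ j, e j| * ℓ ^ 2) := by ring
    _ ≤ Fintype.card ι * μ i * ((∑ j, μ j) * ν + ν * ∑ j, μ j) := by gcongr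
    _ = _ := by ring

end ResidualSystem

noncomputable def lamNum {ι : Type*} (ρ : ι → ℝ) (j : ι) : ℝ := ρ j / (1 - ρ j ^ 2)

noncomputable def covMovement (n : ℕ) (ρ ρs : Fin n → ℝ) (i : Fin n) : ℝ :=
  ∑ j ∈ univ.erase i, (ρs i * ρs j - ρ i * ρ j) * lam n ρ j

section Model

variable {ι : Type*} {ρ : ι → ℝ} {A B : ℝ} {j : ι}

theorem le_lamNum (hA : 0 < A) (hB : 0 < B) (hρ : A ≤ ρ j ∧ ρ j ≤ 1 - B) : A ≤ lamNum ρ j :=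
  hρ.1.trans (le_div_self (hA.le.trans hρ.1) (by nlinarith) (by nlinarith))

theorem lamNum_mul_le_one (hA : 0 < A) (hB : 0 < B) (hρ : A ≤ ρ j ∧ ρ j ≤ 1 - B) :
    lamNum ρ j * B ≤ 1 := by
  rw [lamNum, div_mul_eq_mul_div, div_le_one (by nlinarith)]
  nlinarith

end Model

theorem lam_eq_lamNum_div {n : ℕ} (ρ : Fin n → ℝ) (j : Fin n) :
    lam n ρ j = lamNum ρ j / (1 + ∑ k, lamNum ρ k * ρ k) := by
  simp only [lam, lamNum, div_mul_eq_mul_div, sq]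

theorem two_mul_lamNum_mul_covMovement_eq_emResidual {n : ℕ} (ρ ρs : Fin n → ℝ) (i : Fin n)
    (hQ : 1 + ∑ k, lamNum ρ k * ρ k ≠ 0) :
    2 * lamNum ρ i * (1 + ∑ k, lamNum ρ k * ρ k) * covMovement n ρ ρs i
      = emResidual (fun j => lamNum ρ j * (ρs j + ρ j))
          (fun j => lamNum ρ j * (ρs j - ρ j)) i := by
  set a := lamNum ρ
  set Q := ∑ k, a k * ρ k
  have hlam : ∀ j, lam n ρ j = a j / (1 + Q) := lam_eq_lamNum_div ρ
  have hF : covMovement n ρ ρs i * (1 + Q)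
      = ρs i * (∑ j, a j * ρs j - a i * ρs i) - ρ i * (Q - a i * ρ i) := by
    rw [covMovement, sum_mul, ← sum_erase_eq_sub (mem_univ i),
      ← sum_erase_eq_sub (f := fun k => a k * ρ k) (mem_univ i), mul_sum, mul_sum,
      ← sum_sub_distrib]
    refine sum_congr rfl fun j _ => ?_
    rw [hlam]
    field_simp
  have hM : ∑ j, a j * (ρs j + ρ j) = ∑ j, a j * ρs j + Q := by
    simp only [mul_add, sum_add_distrib, Q]
  have hE : ∑ j, a j * (ρs j - ρ j) = ∑ j, a j * ρs j - Q := by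
    simp only [mul_sub, sum_sub_distrib, Q]
  rw [emResidual, hM, hE]
  linear_combination (2 * a i) * hF

theorem abs_emResidual_mul_sq_le {n : ℕ} {A B φ : ℝ} {ρ ρs : Fin n → ℝ} (hn : 0 < n)
    (hA : 0 < A) (hB : 0 < B) (hρ : ∀ i, A ≤ ρ i ∧ ρ i ≤ 1 - B)
    (hφ : ∀ i, |covMovement n ρ ρs i| ≤ φ) (i : Fin n) :
    |emResidual (fun j => lamNum ρ j * (ρs j + ρ j)) (fun j => lamNum ρ j * (ρs j - ρ j)) i|
      * B ^ 2 ≤ 4 * n * φ := by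
  set a := lamNum ρ
  set Q := ∑ k, a k * ρ k
  have ha : ∀ j, A ≤ a j := fun j => le_lamNum hA hB (hρ j)
  have haB : ∀ j, a j * B ≤ 1 := fun j => lamNum_mul_le_one hA hB (hρ j)
  have hQB : (1 + Q) * B ≤ 2 * n := by
    have : Q * B ≤ n := by
      rw [sum_mul]
      refine (sum_le_sum fun j _ => ?_).trans (by simp : ∑ _j : Fin n, (1 : ℝ) ≤ n)
      nlinarith [haB j, hρ j, ha j]
    have : (1 : ℝ) ≤ n := by exact_mod_cast hn
    nlinarith [hρ ⟨0, hn⟩]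
  have hQ : 0 < 1 + Q := by
    have : 0 ≤ Q := sum_nonneg fun j _ => by nlinarith [ha j, hρ j]
    linarith
  rw [← two_mul_lamNum_mul_covMovement_eq_emResidual ρ ρs i hQ.ne', abs_mul,
    abs_of_pos (by nlinarith [ha i] : 0 < 2 * a i * (1 + Q))]
  have := mul_le_mul (haB i) hQB (by positivity) zero_le_one
  have := abs_nonneg (covMovement n ρ ρs i)
  nlinarith [hφ i]

theorem pow_mul_abs_sub_le_of_abs_covMovement_le {n : ℕ} {A B φ : ℝ} {ρ ρs : Fin n → ℝ}
    (hn : 3 ≤ n) (hA : 0 < A) (hB : 0 < B) (hρ : ∀ i, A ≤ ρ i ∧ ρ i ≤ 1 - B)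
    (hρs : ∀ i, A ≤ ρs i ∧ ρs i ≤ 1 - B)
    (hφ : ∀ i, |covMovement n ρ ρs i| ≤ φ) (i : Fin n) :
    A ^ 6 * B ^ 3 * |ρ i - ρs i| ≤ 4 * n ^ 3 * φ := by
  set a := lamNum ρ
  set μ := fun j => a j * (ρs j + ρ j)
  set e := fun j => a j * (ρs j - ρ j)
  have ha : ∀ j, A ≤ a j := fun j => le_lamNum hA hB (hρ j)
  have hμ : ∀ j, 2 * A ^ 2 ≤ μ j := fun j => by nlinarith [ha j, hρ j, hρs j]
  have hMB : (∑ j, μ j) * B ≤ 2 * n := by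
    rw [sum_mul]
    refine (sum_le_sum fun j _ => ?_).trans (by simp [mul_comm] : ∑ _j : Fin n, (2 : ℝ) ≤ 2 * n)
    nlinarith [lamNum_mul_le_one hA hB (hρ j), hρ j, hρs j, ha j]
  have hr : ∀ j, |emResidual μ e j| ≤ 4 * n * φ / B ^ 2 := fun j => by
    rw [le_div_iff₀ (by positivity)]
    exact abs_emResidual_mul_sq_le (by omega) hA hB hρ hφ j
  have hcore := abs_mul_pow_three_le (by simpa using hn) (by positivity) hμ hr i
  rw [Fintype.card_fin] at hcore
  have hw : |ρ i - ρs i| * μ i ≤ 2 * |e i| := by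
    rw [abs_sub_comm]
    simp only [μ, e, abs_mul, abs_of_pos (hA.trans_le (ha i))]
    have : 0 ≤ a i * |ρs i - ρ i| * (2 - ρs i - ρ i) := by
      have := hρ i; have := hρs i
      exact mul_nonneg (mul_nonneg (hA.le.trans (ha i)) (abs_nonneg _)) (by linarith)
    linarith
  have hφ0 : 0 ≤ φ := (abs_nonneg _).trans (hφ i)
  have hμi : 0 < μ i := by nlinarith [hμ i]
  refine le_of_mul_le_mul_left ?_ hμi
  calc μ i * (A ^ 6 * B ^ 3 * |ρ i - ρs i|) = A ^ 6 * B ^ 3 * (|ρ i - ρs i| * μ i) := by ring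
    _ ≤ A ^ 6 * B ^ 3 * (2 * |e i|) := by gcongr
    _ = B ^ 3 / 4 * (|e i| * (2 * A ^ 2) ^ 3) := by ring
    _ ≤ B ^ 3 / 4 * (2 * n * μ i * (4 * n * φ / B ^ 2) * ∑ j, μ j) := by gcongr
    _ = 2 * n ^ 2 * μ i * φ * ((∑ j, μ j) * B) := by field_simp
    _ ≤ 2 * n ^ 2 * μ i * φ * (2 * n) := by gcongr
    _ = μ i * (4 * n ^ 3 * φ) := by ring

theorem sum_sq_le_card_mul_sum_sq {ι : Type*} [Fintype ι] {x y : ι → ℝ}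
    (h : ∀ i, ∃ j, |x i| ≤ |y j|) : ∑ i, x i ^ 2 ≤ Fintype.card ι * ∑ j, y j ^ 2 := by
  rw [← nsmul_eq_mul, ← card_univ, ← sum_const]
  refine sum_le_sum fun i _ => ?_
  obtain ⟨j, hj⟩ := h i
  calc x i ^ 2 = |x i| ^ 2 := (sq_abs _).symm
    _ ≤ |y j| ^ 2 := pow_le_pow_left₀ (abs_nonneg _) hj 2
    _ = y j ^ 2 := sq_abs _
    _ ≤ ∑ k, y k ^ 2 := single_le_sum (fun k _ => sq_nonneg (y k)) (mem_univ j)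

theorem pow_mul_sum_sq_sub_le {n : ℕ} {A B : ℝ} {ρ ρs : Fin n → ℝ} (hn : 3 ≤ n) (hA : 0 < A)
    (hB : 0 < B) (hρ : ∀ i, A ≤ ρ i ∧ ρ i ≤ 1 - B) (hρs : ∀ i, A ≤ ρs i ∧ ρs i ≤ 1 - B) :
    A ^ 12 * B ^ 6 * ∑ i, (ρ i - ρs i) ^ 2 ≤ 16 * n ^ 7 * ∑ i, covMovement n ρ ρs i ^ 2 := by
  obtain ⟨m, -, hm⟩ := exists_max_image univ (fun i => |covMovement n ρ ρs i|)
    (univ_nonempty_iff.2 ⟨⟨0, by omega⟩⟩)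
  have hsq := sum_sq_le_card_mul_sum_sq (x := fun i => A ^ 6 * B ^ 3 * (ρ i - ρs i))
    (y := fun i => 4 * n ^ 3 * covMovement n ρ ρs i) fun i => ⟨m, by
      rw [abs_mul, abs_of_pos (by positivity : 0 < A ^ 6 * B ^ 3), abs_mul,
        abs_of_nonneg (by positivity : (0 : ℝ) ≤ 4 * n ^ 3)]
      exact pow_mul_abs_sub_le_of_abs_covMovement_le hn hA hB hρ hρs
        (fun j => hm j (mem_univ j)) i⟩
  simp only [mul_pow, ← mul_sum, Fintype.card_fin] at hsq
  linear_combination hsq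

/-- The squared movement of the covariances in one population EM step dominates
the squared parameter error:
`∑_i (∑_{j≠i} (ρ*_i ρ*_j − ρ_i ρ_j) λ_j(ρ))² ≥ c (A¹² B⁸ / n¹¹) ∑_i (ρ_i − ρ*_i)²`. -/
theorem covariance_movement_lower_bound :
    ∃ c > (0 : ℝ), ∀ (n : ℕ), 3 ≤ n → ∀ (A B : ℝ),
      A ∈ Set.Ioo (0 : ℝ) 1 → B ∈ Set.Ioo (0 : ℝ) 1 →
      ∀ ρ ρs : Fin n → ℝ,
        (∀ i, A ≤ ρ i ∧ ρ i ≤ 1 - B) → (∀ i, A ≤ ρs i ∧ ρs i ≤ 1 - B) →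
        c * (A ^ 12 * B ^ 8 / (n : ℝ) ^ 11) * ∑ i, (ρ i - ρs i) ^ 2
          ≤ ∑ i, (∑ j ∈ Finset.univ.erase i,
              (ρs i * ρs j - ρ i * ρ j) * lam n ρ j) ^ 2 := by
  refine ⟨1 / 16, by norm_num, fun n hn A B ⟨hA, _⟩ ⟨hB, hB1⟩ ρ ρs hρ hρs => ?_⟩
  change _ ≤ ∑ i, covMovement n ρ ρs i ^ 2
  have hbound := pow_mul_sum_sq_sub_le hn hA hB hρ hρs
  have hB2 : B ^ 2 ≤ 1 := pow_le_one₀ hB.le hB1.le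
  have hn7 : (n : ℝ) ^ 7 ≤ n ^ 11 :=
    pow_le_pow_right₀ (by exact_mod_cast (by omega : 1 ≤ n)) (by norm_num)
  have hF := sum_nonneg fun i (_ : i ∈ univ) => sq_nonneg (covMovement n ρ ρs i)
  rw [show 1 / 16 * (A ^ 12 * B ^ 8 / n ^ 11) * ∑ i, (ρ i - ρs i) ^ 2
      = B ^ 2 * (A ^ 12 * B ^ 6 * ∑ i, (ρ i - ρs i) ^ 2) / (16 * n ^ 11) by ring,
    div_le_iff₀ (by positivity)]
  calc _ ≤ 1 * (16 * n ^ 7 * ∑ i, covMovement n ρ ρs i ^ 2) := by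
        gcongr
    _ ≤ _ := by nlinarith
end

section
/- Let n ≥ 3, A, B ∈ (0,1) with A ≥ 1/n, and let ρ, ρ* ∈ ℝ^n satisfy A ≤ ρ_i ≤ 1−B and A ≤ ρ*_i ≤ 1−B for all i. Let η ≤ A²/2 and let α be a symmetric n×n real matrix with α_{ij} ∈ [0,1] and |α_{ij} − ρ*_i ρ*_j| ≤ η for all i ≠ j. Let α* denote the matrix with α*_{ij} = ρ*_i ρ*_j. Then for every i: |G^α_i(ρ) − G^{α*}_i(ρ)| ≤ η · (4√8·n³/A³ + √8·n/A). -/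
open Finset

/-- EM update with pairwise correlation estimates `α`:
`G^α_i(ρ) = (λ_i + ∑_{j≠i} λ_j α_{ij}) / sqrt(∑_k λ_k² + ∑_{j≠k} λ_j λ_k α_{jk})`. -/
noncomputable def emG (n : ℕ) (α : Matrix (Fin n) (Fin n) ℝ) (ρ : Fin n → ℝ)
    (i : Fin n) : ℝ :=
  (lam n ρ i + ∑ j ∈ Finset.univ.erase i, lam n ρ j * α i j) /
    Real.sqrt (∑ k, lam n ρ k ^ 2 +
      ∑ j, ∑ k ∈ Finset.univ.erase j, lam n ρ j * lam n ρ k * α j k)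

lemma lam_pos {n : ℕ} {ρ : Fin n → ℝ} (h0 : ∀ j, 0 < ρ j) (h1 : ∀ j, ρ j < 1)
    (j : Fin n) : 0 < lam n ρ j := by
  have hsq : ∀ k : Fin n, 0 < 1 - ρ k ^ 2 := by
    intro k
    nlinarith [h0 k, h1 k]
  have hnum : 0 < ρ j / (1 - ρ j ^ 2) := div_pos (h0 j) (hsq j)
  have hden : (0 : ℝ) < 1 + ∑ k, ρ k ^ 2 / (1 - ρ k ^ 2) := by
    have : (0 : ℝ) ≤ ∑ k, ρ k ^ 2 / (1 - ρ k ^ 2) :=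
      Finset.sum_nonneg fun k _ => div_nonneg (sq_nonneg _) (hsq k).le
    linarith
  exact div_pos hnum hden

/-- Abstract perturbation bound for `a/√Da - b/√Db` when both `Da, Db ≥ K > 0`. -/
lemma abs_div_sqrt_sub_div_sqrt {a b Da Db K : ℝ} (hK : 0 < K)
    (hDa : K ≤ Da) (hDb : K ≤ Db) (hb : 0 ≤ b) :
    |a / Real.sqrt Da - b / Real.sqrt Db| ≤
      |a - b| / Real.sqrt K + b * |Da - Db| / (2 * K * Real.sqrt K) := by
  set sa := Real.sqrt Da with hsa
  set sb := Real.sqrt Db with hsb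
  set sK := Real.sqrt K with hsK
  have hsK0 : 0 < sK := Real.sqrt_pos.2 hK
  have hsa0 : 0 < sa := lt_of_lt_of_le hsK0 (Real.sqrt_le_sqrt hDa)
  have hsb0 : 0 < sb := lt_of_lt_of_le hsK0 (Real.sqrt_le_sqrt hDb)
  have hsaK : sK ≤ sa := Real.sqrt_le_sqrt hDa
  have hsbK : sK ≤ sb := Real.sqrt_le_sqrt hDb
  have hsa2 : sa ^ 2 = Da := Real.sq_sqrt (hK.le.trans hDa)
  have hsb2 : sb ^ 2 = Db := Real.sq_sqrt (hK.le.trans hDb)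
  have hsK2 : sK ^ 2 = K := Real.sq_sqrt hK.le
  have hsplit : a / sa - b / sb = (a - b) / sa + b * (sb - sa) / (sa * sb) := by
    field_simp
    ring
  have h1 : |(a - b) / sa| ≤ |a - b| / sK := by
    rw [abs_div, abs_of_pos hsa0]
    exact div_le_div_of_nonneg_left (abs_nonneg _) hsK0 hsaK
  have hdiffsq : |sb - sa| * (sa + sb) = |Db - Da| := by
    have h := abs_mul (sb - sa) (sa + sb)
    rw [show (sb - sa) * (sa + sb) = Db - Da by nlinarith [hsa2, hsb2]] at h
    rw [abs_of_pos (show (0:ℝ) < sa + sb by linarith)] at h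
    exact h.symm
  have h2 : |b * (sb - sa) / (sa * sb)| ≤ b * |Da - Db| / (2 * K * sK) := by
    rw [abs_div, abs_mul, abs_of_nonneg hb, abs_of_pos (mul_pos hsa0 hsb0)]
    have hdenom : 0 < 2 * K * sK := by positivity
    rw [div_le_div_iff₀ (mul_pos hsa0 hsb0) hdenom]
    have hba : |sb - sa| * (2 * K * sK) ≤ |Da - Db| * (sa * sb) := by
      have hstep : |sb - sa| * (2 * sK) ≤ |Da - Db| := by
        have h2sK : 2 * sK ≤ sa + sb := by linarith
        calc |sb - sa| * (2 * sK) ≤ |sb - sa| * (sa + sb) :=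
              mul_le_mul_of_nonneg_left h2sK (abs_nonneg _)
          _ = |Db - Da| := hdiffsq
          _ = |Da - Db| := abs_sub_comm _ _
      have hKab : K ≤ sa * sb := by
        calc K = sK * sK := by nlinarith [hsK2]
          _ ≤ sa * sb := mul_le_mul hsaK hsbK hsK0.le hsa0.le
      calc |sb - sa| * (2 * K * sK) = (|sb - sa| * (2 * sK)) * K := by ring
        _ ≤ |Da - Db| * K := mul_le_mul_of_nonneg_right hstep hK.le
        _ ≤ |Da - Db| * (sa * sb) := mul_le_mul_of_nonneg_left hKab (abs_nonneg _)
    calc b * |sb - sa| * (2 * K * sK) = b * (|sb - sa| * (2 * K * sK)) := by ring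
      _ ≤ b * (|Da - Db| * (sa * sb)) := mul_le_mul_of_nonneg_left hba hb
      _ = b * |Da - Db| * (sa * sb) := by ring
  calc |a / sa - b / sb| = |(a - b) / sa + b * (sb - sa) / (sa * sb)| := by rw [hsplit]
    _ ≤ |(a - b) / sa| + |b * (sb - sa) / (sa * sb)| := abs_add_le _ _
    _ ≤ |a - b| / sK + b * |Da - Db| / (2 * K * sK) := add_le_add h1 h2

set_option maxHeartbeats 2000000 in
/-- One step of the sample EM is close to one step of the population EM: if the
empirical pairwise correlations `α` are `η`-close to `ρ*_i ρ*_j`, then each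
coordinate of the updates differs by at most `η(4√8 n³/A³ + √8 n/A)`. -/
theorem sample_step_close_to_population_step (n : ℕ) (hn : 3 ≤ n) (A B : ℝ)
    (hA : A ∈ Set.Ioo (0 : ℝ) 1) (hB : B ∈ Set.Ioo (0 : ℝ) 1) (hAn : 1 / (n : ℝ) ≤ A)
    (ρ ρs : Fin n → ℝ)
    (hρ : ∀ i, A ≤ ρ i ∧ ρ i ≤ 1 - B) (hρs : ∀ i, A ≤ ρs i ∧ ρs i ≤ 1 - B)
    (η : ℝ) (hη : η ≤ A ^ 2 / 2)
    (α : Matrix (Fin n) (Fin n) ℝ) (hsym : α.IsSymm)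
    (hα01 : ∀ i j, i ≠ j → α i j ∈ Set.Icc (0 : ℝ) 1)
    (hαη : ∀ i j, i ≠ j → |α i j - ρs i * ρs j| ≤ η) :
    ∀ i, |emG n α ρ i - emG n (Matrix.of fun i j => ρs i * ρs j) ρ i|
      ≤ η * (4 * Real.sqrt 8 * (n : ℝ) ^ 3 / A ^ 3 + Real.sqrt 8 * (n : ℝ) / A) := by
  intro i
  obtain ⟨hA0, hA1⟩ := hA
  obtain ⟨hB0, hB1⟩ := hB
  set L : Fin n → ℝ := lam n ρ with hLdef
  have hL : ∀ j, 0 < L j :=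
    lam_pos (fun j => lt_of_lt_of_le hA0 (hρ j).1)
      (fun j => lt_of_le_of_lt (hρ j).2 (by linarith))
  have hρs01 : ∀ j, 0 < ρs j ∧ ρs j < 1 := fun j =>
    ⟨lt_of_lt_of_le hA0 (hρs j).1, lt_of_le_of_lt (hρs j).2 (by linarith)⟩
  have hρsρs : ∀ j k : Fin n, 0 ≤ ρs j * ρs k ∧ ρs j * ρs k ≤ 1 := by
    intro j k
    constructor
    · exact mul_nonneg (hρs01 j).1.le (hρs01 k).1.le
    · nlinarith [(hρs01 j).1, (hρs01 j).2, (hρs01 k).1, (hρs01 k).2]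
  -- η nonnegative
  have hη0 : 0 ≤ η := by
    have h01 : (⟨0, by omega⟩ : Fin n) ≠ ⟨1, by omega⟩ := by
      simp [Fin.ext_iff]
    exact le_trans (abs_nonneg _) (hαη _ _ h01)
  set S : ℝ := ∑ k, L k with hSdef
  set K : ℝ := ∑ k, L k ^ 2 with hKdef
  have hne : (Finset.univ : Finset (Fin n)).Nonempty :=
    ⟨⟨0, by omega⟩, Finset.mem_univ _⟩
  have hS0 : 0 < S := Finset.sum_pos (fun k _ => hL k) hne
  have hK0 : 0 < K := Finset.sum_pos (fun k _ => pow_pos (hL k) 2) hne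
  -- numerators and denominators
  set Na : ℝ := L i + ∑ j ∈ Finset.univ.erase i, L j * α i j with hNa
  set Ns : ℝ := L i + ∑ j ∈ Finset.univ.erase i, L j * (ρs i * ρs j) with hNs
  set Ca : ℝ := ∑ j, ∑ k ∈ Finset.univ.erase j, L j * L k * α j k with hCa
  set Cs : ℝ := ∑ j, ∑ k ∈ Finset.univ.erase j, L j * L k * (ρs j * ρs k) with hCs
  have hCa0 : 0 ≤ Ca :=
    Finset.sum_nonneg fun j _ => Finset.sum_nonneg fun k hk =>
      mul_nonneg (mul_nonneg (hL j).le (hL k).le)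
        (hα01 j k (Finset.ne_of_mem_erase hk).symm).1
  have hCs0 : 0 ≤ Cs :=
    Finset.sum_nonneg fun j _ => Finset.sum_nonneg fun k _ =>
      mul_nonneg (mul_nonneg (hL j).le (hL k).le) (hρsρs j k).1
  have hDaK : K ≤ K + Ca := by linarith
  have hDsK : K ≤ K + Cs := by linarith
  -- Ns bounds
  have hNs0 : 0 ≤ Ns := by
    have : 0 ≤ ∑ j ∈ Finset.univ.erase i, L j * (ρs i * ρs j) :=
      Finset.sum_nonneg fun j _ => mul_nonneg (hL j).le (hρsρs i j).1
    have := (hL i).le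
    simp only [hNs]; linarith
  have hNsS : Ns ≤ S := by
    have h1 : ∑ j ∈ Finset.univ.erase i, L j * (ρs i * ρs j)
        ≤ ∑ j ∈ Finset.univ.erase i, L j :=
      Finset.sum_le_sum fun j _ => by
        nlinarith [(hL j).le, (hρsρs i j).1, (hρsρs i j).2]
    have h2 : L i + ∑ j ∈ Finset.univ.erase i, L j = S :=
      Finset.add_sum_erase _ _ (Finset.mem_univ i)
    simp only [hNs, hSdef] at *
    linarith
  -- numerator difference
  have hNdiff : |Na - Ns| ≤ η * S := by
    have heq : Na - Ns = ∑ j ∈ Finset.univ.erase i, L j * (α i j - ρs i * ρs j) := by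
      have h1 : ∑ j ∈ Finset.univ.erase i, L j * (α i j - ρs i * ρs j)
          = (∑ j ∈ Finset.univ.erase i, L j * α i j)
            - ∑ j ∈ Finset.univ.erase i, L j * (ρs i * ρs j) := by
        rw [← Finset.sum_sub_distrib]
        exact Finset.sum_congr rfl fun j _ => by ring
      simp only [hNa, hNs]
      rw [h1]
      ring
    rw [heq]
    calc |∑ j ∈ Finset.univ.erase i, L j * (α i j - ρs i * ρs j)|
        ≤ ∑ j ∈ Finset.univ.erase i, |L j * (α i j - ρs i * ρs j)| :=
          Finset.abs_sum_le_sum_abs _ _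
      _ ≤ ∑ j ∈ Finset.univ.erase i, L j * η := by
          apply Finset.sum_le_sum
          intro j hj
          rw [abs_mul, abs_of_pos (hL j)]
          exact mul_le_mul_of_nonneg_left
            (hαη i j (Finset.ne_of_mem_erase hj).symm) (hL j).le
      _ = (∑ j ∈ Finset.univ.erase i, L j) * η := by rw [Finset.sum_mul]
      _ ≤ S * η := by
          apply mul_le_mul_of_nonneg_right _ hη0
          apply Finset.sum_le_sum_of_subset_of_nonneg (Finset.erase_subset _ _)
          intro j _ _; exact (hL j).le
      _ = η * S := by ring
  -- denominator difference
  have hDdiff : |(K + Ca) - (K + Cs)| ≤ η * S ^ 2 := by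
    have heq : (K + Ca) - (K + Cs) =
        ∑ j, ∑ k ∈ Finset.univ.erase j, L j * L k * (α j k - ρs j * ρs k) := by
      have h1 : ∑ j, ∑ k ∈ Finset.univ.erase j, L j * L k * (α j k - ρs j * ρs k)
          = ∑ j, ((∑ k ∈ Finset.univ.erase j, L j * L k * α j k)
              - ∑ k ∈ Finset.univ.erase j, L j * L k * (ρs j * ρs k)) := by
        refine Finset.sum_congr rfl fun j _ => ?_
        rw [← Finset.sum_sub_distrib]
        exact Finset.sum_congr rfl fun k _ => by ring
      rw [h1, Finset.sum_sub_distrib]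
      simp only [hCa, hCs]
      ring
    rw [heq]
    calc |∑ j, ∑ k ∈ Finset.univ.erase j, L j * L k * (α j k - ρs j * ρs k)|
        ≤ ∑ j, |∑ k ∈ Finset.univ.erase j, L j * L k * (α j k - ρs j * ρs k)| :=
          Finset.abs_sum_le_sum_abs _ _
      _ ≤ ∑ j, ∑ k ∈ Finset.univ.erase j, |L j * L k * (α j k - ρs j * ρs k)| :=
          Finset.sum_le_sum fun j _ => Finset.abs_sum_le_sum_abs _ _
      _ ≤ ∑ j, ∑ k ∈ Finset.univ.erase j, L j * L k * η := by
          apply Finset.sum_le_sum; intro j _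
          apply Finset.sum_le_sum; intro k hk
          rw [abs_mul, abs_of_pos (mul_pos (hL j) (hL k))]
          exact mul_le_mul_of_nonneg_left
            (hαη j k (Finset.ne_of_mem_erase hk).symm)
            (mul_pos (hL j) (hL k)).le
      _ ≤ ∑ j : Fin n, ∑ k : Fin n, L j * L k * η := by
          apply Finset.sum_le_sum; intro j _
          apply Finset.sum_le_sum_of_subset_of_nonneg (Finset.erase_subset _ _)
          intro k _ _
          exact mul_nonneg (mul_pos (hL j) (hL k)).le hη0
      _ = η * S ^ 2 := by
          have h1 : ∀ j : Fin n, ∑ k : Fin n, L j * L k * η = L j * (S * η) := by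
            intro j
            rw [hSdef, Finset.sum_mul, Finset.mul_sum]
            exact Finset.sum_congr rfl fun k _ => by ring
          rw [Finset.sum_congr rfl fun j _ => h1 j, ← Finset.sum_mul, ← hSdef]
          ring
  -- Cauchy-Schwarz
  have hCS : S ^ 2 ≤ (n : ℝ) * K := by
    have := sq_sum_le_card_mul_sum_sq (s := (Finset.univ : Finset (Fin n))) (f := L)
    simpa [hSdef, hKdef] using this
  -- main abstract bound
  have hmain : |emG n α ρ i - emG n (Matrix.of fun i j => ρs i * ρs j) ρ i|
      ≤ |Na - Ns| / Real.sqrt K + Ns * |(K + Ca) - (K + Cs)| / (2 * K * Real.sqrt K) := by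
    have : emG n α ρ i = Na / Real.sqrt (K + Ca) := by
      simp only [emG, hNa, hCa, hKdef, hLdef]
    rw [this]
    have : emG n (Matrix.of fun i j => ρs i * ρs j) ρ i = Ns / Real.sqrt (K + Cs) := by
      simp only [emG, hNs, hCs, hKdef, hLdef, Matrix.of_apply]
    rw [this]
    exact abs_div_sqrt_sub_div_sqrt hK0 hDaK hDsK hNs0
  have hsK0 : 0 < Real.sqrt K := Real.sqrt_pos.2 hK0
  have hsKn : S ≤ Real.sqrt n * Real.sqrt K := by
    have h1 : S = Real.sqrt (S ^ 2) := (Real.sqrt_sq hS0.le).symm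
    rw [h1, ← Real.sqrt_mul (by positivity) K]
    exact Real.sqrt_le_sqrt hCS
  have hn0 : (0 : ℝ) < n := by
    have : (3 : ℝ) ≤ n := by exact_mod_cast hn
    linarith
  have hsn0 : 0 < Real.sqrt n := Real.sqrt_pos.2 hn0
  -- term 1 bound: |Na - Ns|/√K ≤ η √n
  have ht1 : |Na - Ns| / Real.sqrt K ≤ η * Real.sqrt n := by
    rw [div_le_iff₀ hsK0]
    calc |Na - Ns| ≤ η * S := hNdiff
      _ ≤ η * (Real.sqrt n * Real.sqrt K) := mul_le_mul_of_nonneg_left hsKn hη0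
      _ = η * Real.sqrt n * Real.sqrt K := by ring
  -- term 2 bound: Ns |ΔD| / (2K√K) ≤ η n √n / 2
  have ht2 : Ns * |(K + Ca) - (K + Cs)| / (2 * K * Real.sqrt K)
      ≤ η * ((n : ℝ) * Real.sqrt n) / 2 := by
    have hden : 0 < 2 * K * Real.sqrt K := by positivity
    rw [div_le_div_iff₀ hden (by norm_num : (0:ℝ) < 2)]
    have hS3 : S ^ 3 ≤ (n : ℝ) * Real.sqrt n * (K * Real.sqrt K) := by
      have h := pow_le_pow_left₀ hS0.le hsKn 3
      calc S ^ 3 ≤ (Real.sqrt n * Real.sqrt K) ^ 3 := h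
        _ = (Real.sqrt n ^ 2 * Real.sqrt n) * (Real.sqrt K ^ 2 * Real.sqrt K) := by ring
        _ = (n : ℝ) * Real.sqrt n * (K * Real.sqrt K) := by
            rw [Real.sq_sqrt hn0.le, Real.sq_sqrt hK0.le]
    calc Ns * |(K + Ca) - (K + Cs)| * 2
        ≤ S * (η * S ^ 2) * 2 := by
          apply mul_le_mul_of_nonneg_right _ (by norm_num)
          exact mul_le_mul hNsS hDdiff (abs_nonneg _) hS0.le
      _ = η * S ^ 3 * 2 := by ring
      _ ≤ η * ((n : ℝ) * Real.sqrt n * (K * Real.sqrt K)) * 2 := by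
          apply mul_le_mul_of_nonneg_right _ (by norm_num)
          exact mul_le_mul_of_nonneg_left hS3 hη0
      _ = η * ((n : ℝ) * Real.sqrt n) * (2 * K * Real.sqrt K) := by ring
  -- final numeric comparison
  have hfinal : η * Real.sqrt n + η * ((n : ℝ) * Real.sqrt n) / 2
      ≤ η * (4 * Real.sqrt 8 * (n : ℝ) ^ 3 / A ^ 3 + Real.sqrt 8 * (n : ℝ) / A) := by
    have hsqrt8 : (2 : ℝ) ≤ Real.sqrt 8 := by
      rw [show (2:ℝ) = Real.sqrt 4 by rw [show (4:ℝ) = 2^2 by norm_num, Real.sqrt_sq]; norm_num]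
      exact Real.sqrt_le_sqrt (by norm_num)
    have hn3 : (3 : ℝ) ≤ n := by exact_mod_cast hn
    have hn1 : (1 : ℝ) ≤ n := by linarith
    have hsnn : Real.sqrt n ≤ n := by
      have h := Real.sqrt_le_sqrt (show (n:ℝ) ≤ (n:ℝ) ^ 2 by nlinarith [hn1, hn0])
      rwa [Real.sqrt_sq hn0.le] at h
    have hA3 : A ^ 3 ≤ 1 := pow_le_one₀ hA0.le hA1.le
    have hA30 : 0 < A ^ 3 := by positivity
    have h8n : (0:ℝ) ≤ Real.sqrt 8 * n := by positivity
    have h1 : Real.sqrt n ≤ Real.sqrt 8 * (n : ℝ) / A := by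
      calc Real.sqrt n ≤ (n : ℝ) := hsnn
        _ = 1 * (n : ℝ) := (one_mul _).symm
        _ ≤ Real.sqrt 8 * n := mul_le_mul_of_nonneg_right (by linarith [hsqrt8]) hn0.le
        _ ≤ Real.sqrt 8 * (n : ℝ) / A := by
            rw [le_div_iff₀ hA0]
            calc Real.sqrt 8 * (n:ℝ) * A ≤ Real.sqrt 8 * (n:ℝ) * 1 :=
                  mul_le_mul_of_nonneg_left hA1.le h8n
              _ = Real.sqrt 8 * (n:ℝ) := mul_one _
    have hn30 : (0:ℝ) ≤ (n:ℝ)^3 := by positivity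
    have h2 : ((n : ℝ) * Real.sqrt n) / 2 ≤ 4 * Real.sqrt 8 * (n : ℝ) ^ 3 / A ^ 3 := by
      have e1 : (n:ℝ) * Real.sqrt n ≤ (n:ℝ) * (n:ℝ) := mul_le_mul_of_nonneg_left hsnn hn0.le
      have e2 : (n:ℝ) * (n:ℝ) ≤ (n:ℝ)^3 := by
        have := pow_le_pow_right₀ hn1 (show 2 ≤ 3 by norm_num)
        calc (n:ℝ) * (n:ℝ) = (n:ℝ)^2 := (sq (n:ℝ)).symm
          _ ≤ (n:ℝ)^3 := this
      have hstep : (n : ℝ) * Real.sqrt n / 2 ≤ (n:ℝ)^3 := by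
        have hpos : (0:ℝ) ≤ (n:ℝ) * Real.sqrt n := mul_nonneg hn0.le hsn0.le
        linarith [e1, e2, hpos]
      calc ((n : ℝ) * Real.sqrt n) / 2 ≤ (n:ℝ)^3 := hstep
        _ = 1 * (n:ℝ)^3 := (one_mul _).symm
        _ ≤ 4 * Real.sqrt 8 * (n : ℝ) ^ 3 :=
            mul_le_mul_of_nonneg_right (by linarith [hsqrt8]) hn30
        _ ≤ 4 * Real.sqrt 8 * (n : ℝ) ^ 3 / A ^ 3 := by
            rw [le_div_iff₀ hA30]
            calc 4 * Real.sqrt 8 * (n:ℝ)^3 * A^3 ≤ 4 * Real.sqrt 8 * (n:ℝ)^3 * 1 :=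
                  mul_le_mul_of_nonneg_left hA3 (by positivity)
              _ = 4 * Real.sqrt 8 * (n:ℝ)^3 := mul_one _
    calc η * Real.sqrt n + η * ((n : ℝ) * Real.sqrt n) / 2
        = η * (Real.sqrt n + ((n : ℝ) * Real.sqrt n) / 2) := by ring
      _ ≤ η * (Real.sqrt 8 * (n : ℝ) / A + 4 * Real.sqrt 8 * (n : ℝ) ^ 3 / A ^ 3) := by
          apply mul_le_mul_of_nonneg_left _ hη0
          exact add_le_add h1 h2
      _ = η * (4 * Real.sqrt 8 * (n : ℝ) ^ 3 / A ^ 3 + Real.sqrt 8 * (n : ℝ) / A) := by ring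
  calc |emG n α ρ i - emG n (Matrix.of fun i j => ρs i * ρs j) ρ i|
      ≤ |Na - Ns| / Real.sqrt K + Ns * |(K + Ca) - (K + Cs)| / (2 * K * Real.sqrt K) := hmain
    _ ≤ η * Real.sqrt n + η * ((n : ℝ) * Real.sqrt n) / 2 := add_le_add ht1 ht2
    _ ≤ _ := hfinal
end
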